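/- Every non-commutative monomial α of degree d in n > 1 variables can be computed by a circuit using only multiplication gates (hence automatically homogeneous) of size O(d·log n / log d): precompute all monomials of degree at most k by a circuit of size O(n^{k+1}), with k ≈ (log₂ d)/(2 log₂ n), and then multiply ⌈d/k⌉ of them together. -/

import Mathlib

/-- Non-commutative polynomials in `n` variables over `F`. -/
abbrev NCPoly (F : Type) [CommSemiring F] (n : ℕ) : Type :=
  MonoidAlgebra F (FreeMonoid (Fin n))

/-- The variable `x_i` as a non-commutative polynomial. -/
noncomputable def NCvar {F : Type} [CommSemiring F] {n : ℕ} (i : Fin n) : NCPoly F n :=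
  MonoidAlgebra.of F (FreeMonoid (Fin n)) (FreeMonoid.of i)

/-- The monomial given by a word (list of variable indices). -/
noncomputable def NCword {F : Type} [CommSemiring F] {n : ℕ} (w : List (Fin n)) : NCPoly F n :=
  MonoidAlgebra.single (FreeMonoid.ofList w) 1

/-- `f` is homogeneous of degree `d`. -/
def IsHomog {F : Type} [CommSemiring F] {n : ℕ} (d : ℕ) (f : NCPoly F n) : Prop :=
  ∀ w ∈ f.coeff.support, (FreeMonoid.toList w).length = d

/-- Restriction `f^J` for the interval `J = [a,b]` (1-indexed positions):
linear extension of `x_{j_1}⋯x_{j_d} ↦ x_{j_a}⋯x_{j_b}`. -/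
noncomputable def NCrestrict {F : Type} [CommSemiring F] {n : ℕ} (a b : ℕ)
    (f : NCPoly F n) : NCPoly F n :=
  MonoidAlgebra.ofCoeff (Finsupp.mapDomain
    (fun w => FreeMonoid.ofList (((FreeMonoid.toList w).drop (a - 1)).take (b + 1 - a))) f.coeff)

/-- Sum of coefficients of `f` (i.e. `f^∅`, all variables set to 1). -/
noncomputable def coeffSum {F : Type} [CommSemiring F] {n : ℕ} (f : NCPoly F n) : F :=
  Finsupp.sum f.coeff (fun _ c => c)

/-- A gate operation; children point to earlier gates (indices `< k`). -/
inductive GateOp (F : Type) (n k : ℕ) where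
  | var : Fin n → GateOp F n k
  | const : F → GateOp F n k
  | add : Fin k → Fin k → GateOp F n k
  | mul : Fin k → Fin k → GateOp F n k

/-- A non-commutative arithmetic circuit: gates in topological order. -/
structure NCCircuit (F : Type) (n : ℕ) where
  gates : ℕ
  gate : (i : Fin gates) → GateOp F n i.val

namespace NCCircuit

variable {F : Type} [CommSemiring F] {n : ℕ}

/-- The polynomial computed at gate `i`. -/
noncomputable def evalAux (c : NCCircuit F n) : (i : ℕ) → i < c.gates → NCPoly F n
  | i, h =>
    match c.gate ⟨i, h⟩ with
    | .var v => NCvar v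
    | .const a => algebraMap F (NCPoly F n) a
    | .add a b => c.evalAux a.val (a.isLt.trans h) + c.evalAux b.val (b.isLt.trans h)
    | .mul a b => c.evalAux a.val (a.isLt.trans h) * c.evalAux b.val (b.isLt.trans h)
  termination_by i _ => i

noncomputable def eval (c : NCCircuit F n) (i : Fin c.gates) : NCPoly F n :=
  c.evalAux i.val i.isLt

/-- `c` computes `f` if some gate computes `f`. -/
def Computes (c : NCCircuit F n) (f : NCPoly F n) : Prop := ∃ i, c.eval i = f

/-- Every gate computes a homogeneous polynomial. -/
def Homogeneous (c : NCCircuit F n) : Prop := ∀ i, ∃ d, IsHomog d (c.eval i)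

/-- `f` is a constant (scalar) polynomial. -/
def IsConstPoly (f : NCPoly F n) : Prop := ∃ a : F, f = algebraMap F (NCPoly F n) a

/-- Size: the number of non-input gates. -/
noncomputable def size (c : NCCircuit F n) : ℕ :=
  {i : Fin c.gates |
    (∃ a b, c.gate i = GateOp.add a b) ∨ (∃ a b, c.gate i = GateOp.mul a b)}.ncard

/-- Non-scalar size: the number of product gates both of whose inputs are non-constant. -/
noncomputable def nonScalarSize (c : NCCircuit F n) : ℕ :=
  {i : Fin c.gates | ∃ a b, c.gate i = GateOp.mul a b ∧
      ¬ IsConstPoly (c.evalAux a.val (a.isLt.trans i.isLt)) ∧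
      ¬ IsConstPoly (c.evalAux b.val (b.isLt.trans i.isLt))}.ncard

/-- A circuit using only variable inputs and product gates. -/
def MulOnly (c : NCCircuit F n) : Prop :=
  ∀ i, (∃ v, c.gate i = GateOp.var v) ∨ (∃ a b, c.gate i = GateOp.mul a b)

end NCCircuit

/-- Left partial derivative `∂_x f`. -/
noncomputable def leftDeriv {F : Type} [CommSemiring F] {n : ℕ} (x : Fin n)
    (f : NCPoly F n) : NCPoly F n :=
  Finsupp.sum f.coeff (fun w c =>
    if (FreeMonoid.toList w).head? = some x then
      MonoidAlgebra.single (FreeMonoid.ofList (FreeMonoid.toList w).tail) c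
    else 0)

/-- `E_{⋅}^k` over the variables `x_j` with `j ≥ i` (0-indexed): the ordered
symmetric polynomial `Σ_{i ≤ j_1 < ⋯ < j_k} x_{j_1}⋯x_{j_k}`. -/
noncomputable def esymAbove (F : Type) [CommSemiring F] (n i k : ℕ) : NCPoly F n :=
  ∑ s ∈ ((Finset.univ : Finset (Fin n)).filter (fun j => i ≤ j.val)).powersetCard k,
    MonoidAlgebra.single (FreeMonoid.ofList (s.sort (· ≤ ·))) 1

/-- The ordered symmetric polynomial `E_n^d`. -/
noncomputable def esym (F : Type) [CommSemiring F] (n d : ℕ) : NCPoly F n :=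
  esymAbove F n 0 d

/-! A product-only circuit first computes every word of length at most `K`, one product gate per
word of length `≥ 2` (a word is its longest proper prefix times its last letter), at cost
`n² + ⋯ + nᴷ ≤ 2nᴷ`; it then multiplies the length-`K` blocks of `α` from left to right, one gate
per block. With `K = ⌊log_n d⌋ / 2` the dictionary costs at most `2√d` and the chain `d / K`, both
`O(d log n / log d)`; when `d < n⁴`, `K = 1` is the naive chain of `d - 1` products. -/

namespace NCCircuit

variable {F : Type} {n : ℕ}

def push (c : NCCircuit F n) (op : GateOp F n c.gates) : NCCircuit F n where
  gates := c.gates + 1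
  gate := Fin.lastCases (motive := fun i => GateOp F n i.val) op c.gate

theorem push_gate_of_lt (c : NCCircuit F n) (op : GateOp F n c.gates) {i : ℕ} (h : i < c.gates)
    (h' : i < (c.push op).gates) : (c.push op).gate ⟨i, h'⟩ = c.gate ⟨i, h⟩ :=
  Fin.lastCases_castSucc (motive := fun i => GateOp F n i.val) (i := ⟨i, h⟩) ..

theorem push_gate_self (c : NCCircuit F n) (op : GateOp F n c.gates)
    (h : c.gates < (c.push op).gates) : (c.push op).gate ⟨c.gates, h⟩ = op :=
  Fin.lastCases_last (motive := fun i => GateOp F n i.val) ..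

theorem MulOnly.push_mul {c : NCCircuit F n} (hc : c.MulOnly) (a b : Fin c.gates) :
    (c.push (.mul a b)).MulOnly := by
  rintro ⟨i, hi⟩
  rcases Nat.lt_succ_iff_lt_or_eq.mp hi with hi | rfl
  · rw [push_gate_of_lt c _ hi]
    exact hc ⟨i, hi⟩
  · exact Or.inr ⟨a, b, push_gate_self ..⟩

theorem size_push_mul (c : NCCircuit F n) (a b : Fin c.gates) :
    (c.push (.mul a b)).size = c.size + 1 := by
  classical
  simp only [size, Set.ncard_eq_toFinset_card', Set.toFinset_ofPred]
  rw [Finset.card_filter, Finset.card_filter]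
  change ∑ i : Fin (c.gates + 1), _ = _
  have hcast (i : Fin c.gates) : (c.push (.mul a b)).gate i.castSucc = c.gate i :=
    push_gate_of_lt c _ i.isLt _
  have hlast : (c.push (.mul a b)).gate (Fin.last c.gates) = .mul a b := push_gate_self c _ _
  rw [Fin.sum_univ_castSucc]
  simp [hcast, hlast]

def vars (F : Type) (n : ℕ) : NCCircuit F n := ⟨n, fun i => .var i⟩

theorem vars_mulOnly : (vars F n).MulOnly := fun i => Or.inl ⟨i, rfl⟩

theorem size_vars : (vars F n).size = 0 := by
  simp [size, vars]

variable [CommSemiring F]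

theorem evalAux_push (c : NCCircuit F n) (op : GateOp F n c.gates) (i : ℕ) (h : i < c.gates)
    (h' : i < (c.push op).gates) : (c.push op).evalAux i h' = c.evalAux i h := by
  induction i using Nat.strong_induction_on with
  | _ i ih =>
    rw [evalAux.eq_1 (c.push op), evalAux.eq_1 c, push_gate_of_lt c op h]
    cases c.gate ⟨i, h⟩ with
    | var | const => rfl
    | add a b => exact congrArg₂ (· + ·) (ih a a.isLt _ _) (ih b b.isLt _ _)
    | mul a b => exact congrArg₂ (· * ·) (ih a a.isLt _ _) (ih b b.isLt _ _)

theorem Computes.push {c : NCCircuit F n} {f : NCPoly F n} (hf : c.Computes f)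
    (op : GateOp F n c.gates) : (c.push op).Computes f := by
  obtain ⟨i, rfl⟩ := hf
  exact ⟨⟨i, Nat.lt_succ_of_lt i.isLt⟩, evalAux_push c op i i.isLt _⟩

theorem computes_push_mul (c : NCCircuit F n) (a b : Fin c.gates) :
    (c.push (.mul a b)).Computes (c.eval a * c.eval b) := by
  refine ⟨⟨c.gates, Nat.lt_succ_self _⟩, ?_⟩
  rw [eval, evalAux.eq_1 (c.push _), push_gate_self]
  exact congrArg₂ (· * ·) (evalAux_push c _ a a.isLt _) (evalAux_push c _ b b.isLt _)

theorem vars_computes_NCvar (i : Fin n) : (vars F n).Computes (NCvar i) :=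
  ⟨i, (evalAux.eq_1 (vars F n) i i.isLt).trans rfl⟩

end NCCircuit

open NCCircuit

section MulComputable

variable {F : Type} [CommSemiring F] {n : ℕ} {S T : Set (NCPoly F n)} {s t : ℕ}

def MulComputable (S : Set (NCPoly F n)) (s : ℕ) : Prop :=
  ∃ c : NCCircuit F n, c.MulOnly ∧ (∀ f ∈ S, c.Computes f) ∧ c.size ≤ s

theorem mulComputable_range_NCvar : MulComputable (Set.range (NCvar : Fin n → NCPoly F n)) 0 :=
  ⟨vars F n, vars_mulOnly, by rintro _ ⟨i, rfl⟩; exact vars_computes_NCvar i, size_vars.le⟩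

theorem MulComputable.mono (h : MulComputable S s)
    (hTS : T ⊆ S) (hst : s ≤ t) : MulComputable T t := by
  obtain ⟨c, hc, hS, hs⟩ := h
  exact ⟨c, hc, fun f hf => hS f (hTS hf), hs.trans hst⟩

theorem MulComputable.insert_mul {f g : NCPoly F n}
    (h : MulComputable S s) (hf : f ∈ S) (hg : g ∈ S) :
    MulComputable (insert (f * g) S) (s + 1) := by
  obtain ⟨c, hc, hS, hs⟩ := h
  obtain ⟨i, rfl⟩ := hS f hf
  obtain ⟨j, rfl⟩ := hS g hg
  refine ⟨c.push (.mul i j), hc.push_mul i j, ?_, by rw [size_push_mul]; omega⟩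
  rintro _ (rfl | hh)
  · exact computes_push_mul c i j
  · exact (hS _ hh).push _

theorem MulComputable.union_image {ι : Type*} (h : MulComputable S s) (T : Finset ι)
    (p : ι → NCPoly F n) (hp : ∀ i ∈ T, ∃ f ∈ S, ∃ g ∈ S, p i = f * g) :
    MulComputable (S ∪ p '' T) (s + T.card) := by
  induction T using Finset.cons_induction with
  | empty => simpa using h
  | cons i T hi ih =>
    obtain ⟨f, hf, g, hg, hpi⟩ := hp i (Finset.mem_cons_self i T)
    have hT := ih fun j hj => hp j (Finset.mem_cons_of_mem hj)
    rw [Finset.coe_cons, Set.image_insert_eq, Set.union_insert, Finset.card_cons, ← add_assoc, hpi]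
    exact hT.insert_mul (Set.subset_union_left hf) (Set.subset_union_left hg)

end MulComputable

section Words

variable {F : Type} [CommSemiring F] {n : ℕ}

theorem NCword_append (u v : List (Fin n)) :
    (NCword (u ++ v) : NCPoly F n) = NCword u * NCword v := by
  simp [NCword, MonoidAlgebra.single_mul_single, FreeMonoid.ofList_append]

theorem NCword_nil : (NCword [] : NCPoly F n) = 1 := rfl

theorem NCword_singleton (a : Fin n) : (NCword [a] : NCPoly F n) = NCvar a := by
  simp [NCvar, NCword, MonoidAlgebra.of_apply]

def shortMonomials (F : Type) [CommSemiring F] (n K : ℕ) : Set (NCPoly F n) :=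
  NCword '' {u | u ≠ [] ∧ u.length ≤ K}

theorem mulComputable_shortMonomials {K : ℕ} (hK : 1 ≤ K) :
    MulComputable (shortMonomials F n K) (∑ j ∈ Finset.Ioc 1 K, n ^ j) := by
  induction K, hK using Nat.le_induction with
  | base =>
    refine mulComputable_range_NCvar.mono ?_ (Nat.zero_le _)
    rintro _ ⟨_ | ⟨a, _ | _⟩, ⟨hne, hlen⟩, rfl⟩
    · exact absurd rfl hne
    · exact ⟨a, (NCword_singleton a).symm⟩
    · simp at hlen
  | succ K hK ih =>
    have hlayer := ih.union_image (Finset.univ : Finset (List.Vector (Fin n) (K + 1)))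
      (fun v => NCword v.toList) ?_
    · rw [Finset.card_univ, card_vector, Fintype.card_fin, ← Finset.sum_Ioc_succ_top hK] at hlayer
      refine hlayer.mono ?_ le_rfl
      rintro _ ⟨u, ⟨hne, hlen⟩, rfl⟩
      rcases hlen.lt_or_eq with hlt | heq
      · exact Or.inl ⟨u, ⟨hne, Nat.lt_succ_iff.mp hlt⟩, rfl⟩
      · exact Or.inr ⟨⟨u, heq⟩, Finset.mem_coe.mpr (Finset.mem_univ _), rfl⟩
    · intro v _
      have hlen := v.toList_length
      refine ⟨NCword v.toList.dropLast, ⟨_, ⟨?_, ?_⟩, rfl⟩, NCword [v.toList.getLast ?_],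
        ⟨_, ⟨List.cons_ne_nil _ _, by simpa using hK⟩, rfl⟩, ?_⟩
      · exact List.ne_nil_of_length_pos (by simp [hlen]; omega)
      · simp [hlen]
      · exact List.ne_nil_of_length_pos (by omega)
      · rw [← NCword_append, List.dropLast_append_getLast]

theorem MulComputable.mul_NCword {S : Set (NCPoly F n)} {s K : ℕ} (h : MulComputable S s)
    (hdict : shortMonomials F n K ⊆ S) {f : NCPoly F n} (hf : f ∈ S) (q : ℕ) (w : List (Fin n))
    (hw : w.length ≤ q * K) :
    MulComputable {f * NCword w} (s + q) := by
  induction q generalizing S s f w with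
  | zero =>
    obtain rfl : w = [] := List.eq_nil_of_length_eq_zero (by simpa using hw)
    refine h.mono ?_ (by omega)
    simpa [NCword_nil] using hf
  | succ q ih =>
    rcases eq_or_ne w [] with rfl | hne
    · exact h.mono (by simpa [NCword_nil] using hf) (by omega)
    have hK : K ≠ 0 := by rintro rfl; simp_all
    have htake : NCword (w.take K) ∈ S :=
      hdict ⟨_, ⟨by simp [List.take_eq_nil_iff, hK, hne], List.length_take_le _ _⟩, rfl⟩
    have hstep := h.insert_mul hf htake
    have hrest := ih hstep (hdict.trans (Set.subset_insert _ _)) (Set.mem_insert _ _) (w.drop K)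
      (by simp only [List.length_drop]; rw [Nat.succ_mul] at hw; omega)
    rw [mul_assoc, ← NCword_append, List.take_append_drop] at hrest
    exact hrest.mono le_rfl (by omega)

theorem mulComputable_NCword {K : ℕ} (hK : 1 ≤ K) {w : List (Fin n)} (hw : w ≠ []) :
    MulComputable {(NCword w : NCPoly F n)} (∑ j ∈ Finset.Ioc 1 K, n ^ j + w.length / K) := by
  have htake : NCword (w.take K) ∈ shortMonomials F n K :=
    ⟨_, ⟨by simp [List.take_eq_nil_iff, hw]; omega, List.length_take_le _ _⟩, rfl⟩
  have hdrop : (w.drop K).length ≤ w.length / K * K := by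
    have := Nat.lt_div_mul_add (a := w.length) hK
    simp only [List.length_drop]
    omega
  have := (mulComputable_shortMonomials hK).mul_NCword subset_rfl htake _ _ hdrop
  rwa [← NCword_append, List.take_append_drop] at this

end Words

theorem Nat.sum_Ioc_one_pow_le {n : ℕ} (hn : 2 ≤ n) (K : ℕ) :
    ∑ j ∈ Finset.Ioc 1 K, n ^ j ≤ 2 * n ^ K := by
  have hsub : Finset.Ioc 1 K ⊆ Finset.range (K + 1) := fun j hj => by
    simp only [Finset.mem_Ioc, Finset.mem_range] at hj ⊢
    omega
  have hlt : ∑ j ∈ Finset.range K, n ^ j < n ^ K :=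
    Nat.geomSum_lt hn fun j hj => Finset.mem_range.mp hj
  calc ∑ j ∈ Finset.Ioc 1 K, n ^ j ≤ ∑ j ∈ Finset.range (K + 1), n ^ j :=
        Finset.sum_le_sum_of_subset hsub
    _ = ∑ j ∈ Finset.range K, n ^ j + n ^ K := Finset.sum_range_succ _ _
    _ ≤ 2 * n ^ K := by omega

namespace Real

theorem log_le_mul_log_of_le_pow {a y : ℝ} (hy : 0 < y) {m : ℕ} (h : y ≤ a ^ m) :
    log y ≤ m * log a := by
  rw [← log_pow]
  exact log_le_log hy h

theorem log_le_two_mul_sqrt {y : ℝ} (hy : 0 ≤ y) : log y ≤ 2 * √y := by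
  linarith [log_sqrt hy, log_le_self (sqrt_nonneg y)]

theorem two_mul_pow_add_div_mul_log_le {a y : ℝ} {K : ℕ} (ha : 2 ≤ a) (hK : 0 < K)
    (hlow : a ^ (2 * K) ≤ y) (hup : y ≤ a ^ (2 * K + 2)) :
    (2 * a ^ K + y / K) * log y ≤ 12 * y * log a := by
  have hy : 0 < y := lt_of_lt_of_le (by positivity) hlow
  have hK' : (1 : ℝ) ≤ K := by exact_mod_cast hK
  have hloga : 1 / 2 < log a :=
    (by norm_num : (1 : ℝ) / 2 < 0.6931471803).trans
      (log_two_gt_d9.trans_le (log_le_log (by norm_num) ha))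
  have hlogy : 0 ≤ log y := log_nonneg (le_trans (one_le_pow₀ (by linarith)) hlow)
  have hsqrt : a ^ K ≤ √y := (le_sqrt (by positivity) hy.le).mpr (by rw [← pow_mul']; exact hlow)
  have hlog_sqrt : log y ≤ 2 * √y := log_le_two_mul_sqrt hy.le
  have hlog_pow : log y ≤ (2 * K + 2) * log a := by
    exact_mod_cast log_le_mul_log_of_le_pow hy hup
  have hsq : √y * √y = y := mul_self_sqrt hy.le
  have h1 : 2 * a ^ K * log y ≤ 8 * y * log a := by
    nlinarith [mul_le_mul hsqrt hlog_sqrt hlogy (sqrt_nonneg y)]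
  have h2 : y / K * log y ≤ 4 * y * log a := by
    have hcoef : (2 * K + 2) * log a ≤ 4 * K * log a := by nlinarith
    calc y / K * log y = y * log y / K := by ring
      _ ≤ y * (4 * K * log a) / K := by gcongr; exact hlog_pow.trans hcoef
      _ = 4 * y * log a := by field_simp
  linarith

end Real

theorem exists_block_length {n d : ℕ} (hn : 2 ≤ n) (hd : 2 ≤ d) :
    ∃ K, 1 ≤ K ∧
      ((∑ j ∈ Finset.Ioc 1 K, n ^ j + d / K : ℕ) : ℝ) * Real.log d ≤ 12 * d * Real.log n := by
  have hd0 : (0 : ℝ) < d := by positivity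
  have hlogn : 0 < Real.log n := Real.log_pos (by exact_mod_cast hn)
  set L := Nat.log n d
  have hlow : n ^ L ≤ d := Nat.pow_log_le_self n (by omega)
  have hup : d < n ^ (L + 1) := Nat.lt_pow_succ_log_self (by omega) d
  by_cases hL : L < 4
  · refine ⟨1, le_rfl, ?_⟩
    have h4 : d ≤ n ^ 4 := hup.le.trans (Nat.pow_le_pow_right (by omega) (by omega))
    have := Real.log_le_mul_log_of_le_pow (a := n) hd0 (m := 4) (by exact_mod_cast h4)
    simp only [Finset.Ioc_self, Finset.sum_empty, Nat.div_one, zero_add]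
    push_cast at this
    nlinarith
  · set K := L / 2
    have hsum := Nat.sum_Ioc_one_pow_le hn K
    have hkey := Real.two_mul_pow_add_div_mul_log_le (a := n) (y := d) (K := K)
      (by exact_mod_cast hn) (by omega)
      (by exact_mod_cast (Nat.pow_le_pow_right (by omega) (by omega)).trans hlow)
      (by exact_mod_cast hup.le.trans (Nat.pow_le_pow_right (by omega) (by omega)))
    refine ⟨K, by omega, le_trans ?_ hkey⟩
    gcongr
    push_cast
    gcongr
    · exact_mod_cast hsum
    · exact Nat.cast_div_le

/-- Every non-commutative monomial of degree `d` in `n > 1` variables can be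
computed by a circuit using only multiplication gates (hence automatically
homogeneous) of size `O(d · log n / log d)`. -/
theorem monomial_upper_bound (F : Type) [Field F] :
    ∃ C : ℝ, 0 < C ∧ ∀ (n d : ℕ), 1 < n → 1 < d → ∀ σ : Fin d → Fin n,
      ∃ c : NCCircuit F n, c.MulOnly ∧
        c.Computes (NCword ((List.finRange d).map σ)) ∧
        (c.size : ℝ) ≤ C * d * Real.log n / Real.log d := by
  refine ⟨12, by norm_num, fun n d hn hd σ => ?_⟩
  have hlen : ((List.finRange d).map σ).length = d := by simp
  obtain ⟨K, hK, hbound⟩ := exists_block_length hn hd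
  obtain ⟨c, hc, hcomp, hsize⟩ := mulComputable_NCword (F := F) hK
    (w := (List.finRange d).map σ) (List.ne_nil_of_length_pos (by omega))
  refine ⟨c, hc, hcomp _ rfl, ?_⟩
  rw [le_div_iff₀ (Real.log_pos (by exact_mod_cast hd))]
  rw [hlen] at hsize
  exact le_trans (by gcongr) hbound
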